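/- Fix d ≥ 2 and an integer r with r ∉ {1,2,4}, and let X_r ⊆ (ℤ/rℤ)^{ℤ^d} be the set of configurations x with x_n − x_m = ±1 (mod r) whenever ‖n−m‖₁ = 1. Then X_r has the pivot property: for any x,y ∈ X_r with x_n = y_n for all but finitely many n, there exist x = z⁽⁰⁾, z⁽¹⁾, …, z⁽ᴺ⁾ = y in X_r such that for each 0 ≤ k < N, z⁽ᵏ⁾ and z⁽ᵏ⁺¹⁾ differ at exactly one site of ℤ^d. -/

import Mathlib

/-!
Because `r` divides neither `2` nor `4`, the four `±1` increments of a point of `X_r` around a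
unit square sum to `0` in `ℤ`, so every point of `X_r` lifts to an integer height function. For two
points agreeing off a finite set, the difference of their lifts is locally constant outside a large
box, a region that is connected when `d ≥ 2`; normalising at a far point makes the lifts agree
there. While the lifts `h₁, h₂` differ, say `h₂ < h₁` somewhere, a site maximising `2 h₁ - h₂` among
those with `h₂ < h₁` is a strict local maximum of `h₁`; lowering `h₁` there by `2` (by parity it
stays `≥ h₂`) is a single-site move of `X_r` that decreases `∑ |h₁ - h₂|`.
-/

open scoped BigOperators

/-- Sites of the standard Cayley graph of `ℤ^d`. -/
abbrev Site (d : ℕ) := Fin d → ℤ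

/-- Adjacency in the standard Cayley graph of `ℤ^d`: `‖n - m‖₁ = 1`. -/
def adjacent {d : ℕ} (n m : Site d) : Prop :=
  (∑ i, |n i - m i|) = 1

/-- The nearest neighbor shift of finite type `X_r`. -/
def Xr (d r : ℕ) : Set (Site d → ZMod r) :=
  {x | ∀ n m : Site d, adjacent n m → x n - x m = 1 ∨ x n - x m = -1}

open Finset Function Relation

section Update

variable {ι M : Type*} [DecidableEq ι] [AddZeroClass M]

theorem update_add_single_self (n : ι → M) (i : ι) (t b : M) :
    update (n + Pi.single i t) i b = update n i b := by
  ext k; by_cases hk : k = i <;> simp [hk]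

theorem update_add_single_of_ne {i j : ι} (hij : i ≠ j) (n : ι → M) (t b : M) :
    update (n + Pi.single i t) j b = update n j b + Pi.single i t := by
  ext k; by_cases hk : k = j <;> simp [hk, Pi.single_apply, Ne.symm hij]

theorem update_zero_add_single (n : ι → M) (i : ι) : update n i 0 + Pi.single i (n i) = n := by
  ext k; by_cases hk : k = i <;> simp [hk]

end Update

section Lattice

variable {ι α : Type*}

theorem apply_add_single_eq_of_forall_add_single_eq [DecidableEq ι] {u : (ι → ℤ) → α}
    (hu : ∀ n i, u (n + Pi.single i 1) = u n) (n : ι → ℤ) (i : ι) (t : ℤ) :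
    u (n + Pi.single i t) = u n := by
  have hper : Periodic (fun t => u (n + Pi.single i t)) 1 := fun t => by
    simp only [Pi.single_add, ← add_assoc, hu]
  simpa using (hper.int_mul t).eq

theorem apply_eq_of_forall_add_single_eq [DecidableEq ι] [Fintype ι] {u : (ι → ℤ) → α}
    (hu : ∀ n i, u (n + Pi.single i 1) = u n) (n m : ι → ℤ) : u n = u m := by
  suffices h : ∀ n, u n = u 0 by rw [h n, h m]
  intro n
  have hpartial : ∀ s : Finset ι, u (∑ i ∈ s, Pi.single i (n i)) = u 0 := by
    intro s
    induction s using Finset.induction_on with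
    | empty => simp
    | insert a s ha ih =>
      rw [sum_insert ha, add_comm, apply_add_single_eq_of_forall_add_single_eq hu, ih]
  simpa only [univ_sum_single] using hpartial univ

def boxCompl (M : ℤ) : Set (ι → ℤ) := {n | ∃ i, M ≤ |n i|}

theorem finite_compl_boxCompl [Finite ι] (M : ℤ) : (boxCompl M : Set (ι → ℤ))ᶜ.Finite := by
  refine (Set.Finite.pi (t := fun _ : ι => Set.Ioo (-M) M) fun _ => Set.finite_Ioo _ _).subset ?_
  intro n hn
  simp only [boxCompl, Set.mem_compl_iff] at hn
  simpa [abs_lt] using hn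

theorem Set.Finite.exists_disjoint_boxCompl [Finite ι] {S : Set (ι → ℤ)} (hS : S.Finite) :
    ∃ M : ℤ, Disjoint S (boxCompl M) := by
  obtain ⟨M, hM⟩ := (hS.image2 (fun n i => |n i|) Set.finite_univ).bddAbove
  refine ⟨M + 1, Set.disjoint_left.2 fun n hn ⟨i, hi⟩ => ?_⟩
  have := hM (Set.mem_image2_of_mem hn (Set.mem_univ i))
  omega

theorem apply_eq_of_forall_add_single_eq_on_boxCompl [DecidableEq ι] [Fintype ι] [Nontrivial ι]
    {u : (ι → ℤ) → α} {M : ℤ}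
    (hu : ∀ n i, n ∈ boxCompl M → n + Pi.single i 1 ∈ boxCompl M → u (n + Pi.single i 1) = u n)
    {n m : ι → ℤ} (hn : n ∈ boxCompl M) (hm : m ∈ boxCompl M) : u n = u m := by
  -- Freezing a far coordinate `j` at `a` turns `u` into a function invariant under every step.
  have slice : ∀ j a, M ≤ |a| → ∀ p q : ι → ℤ, u (update p j a) = u (update q j a) := by
    intro j a ha
    refine apply_eq_of_forall_add_single_eq (u := fun p => u (update p j a)) fun p i => ?_
    by_cases hij : i = j
    · subst hij
      rw [update_add_single_self]
    · rw [update_add_single_of_ne hij]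
      exact hu _ _ ⟨j, by simpa using ha⟩ ⟨j, by simpa [Pi.single_apply, Ne.symm hij] using ha⟩
  suffices h : ∀ n ∈ boxCompl M, u n = u (fun _ => M) by rw [h n hn, h m hm]
  rintro n ⟨j, hj⟩
  obtain ⟨k, hkj⟩ := exists_ne j
  have hk : update (update (fun _ => M) j (n j)) k M = update (fun _ => M) j (n j) :=
    update_eq_self_iff.2 (by simp [hkj])
  calc u n = u (update (fun _ => M) j (n j)) := by rw [← slice j _ hj n, update_eq_self]
    _ = u (update (fun _ => M) k M) := by rw [← hk, slice k M (le_abs_self M)]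
    _ = u (fun _ => M) := by rw [update_eq_self_iff.2 rfl]

end Lattice

section Potential

variable {ι G : Type*} [DecidableEq ι] [AddCommGroup G]

noncomputable def intPrimitive (f : ℤ → G) (t : ℤ) : G :=
  ∑ k ∈ Ico 0 t, f k - ∑ k ∈ Ico t 0, f k

@[simp]
theorem intPrimitive_zero (f : ℤ → G) : intPrimitive f 0 = 0 := by
  simp [intPrimitive]

theorem intPrimitive_add_one (f : ℤ → G) (t : ℤ) :
    intPrimitive f (t + 1) = intPrimitive f t + f t := by
  rcases le_or_gt 0 t with ht | ht
  · rw [intPrimitive, intPrimitive, ← insert_Ico_right_eq_Ico_add_one ht,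
      sum_insert (by simp), Ico_eq_empty_of_le (by omega : (0 : ℤ) ≤ t + 1), Ico_eq_empty_of_le ht]
    abel
  · rw [intPrimitive, intPrimitive, ← insert_Ico_add_one_left_eq_Ico ht,
      sum_insert (by simp), Ico_eq_empty_of_le (by omega : t + 1 ≤ 0), Ico_eq_empty_of_le ht.le]
    abel

theorem exists_potential_of_closed [Fintype ι] (c : (ι → ℤ) → ι → G)
    (hc : ∀ n i j, c n i + c (n + Pi.single i 1) j = c n j + c (n + Pi.single j 1) i) :
    ∃ g : (ι → ℤ) → G, ∀ n i, g (n + Pi.single i 1) = g n + c n i := by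
  suffices h : ∀ s : Finset ι,
      ∃ g : (ι → ℤ) → G, ∀ n, ∀ i ∈ s, g (n + Pi.single i 1) = g n + c n i by
    obtain ⟨g, hg⟩ := h univ
    exact ⟨g, fun n i => hg n i (mem_univ i)⟩
  intro s
  induction s using Finset.induction_on with
  | empty => exact ⟨0, by simp⟩
  | insert a s ha ih =>
    obtain ⟨g, hg⟩ := ih
    let L : (ι → ℤ) → ℤ → G := fun m => intPrimitive fun t => c (m + Pi.single a t) a
    have hL : ∀ m t, L m (t + 1) = L m t + c (m + Pi.single a t) a :=
      fun m t => intPrimitive_add_one _ t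
    have hshift : ∀ m j t, L (m + Pi.single j 1) t = L m t + c (m + Pi.single a t) j - c m j := by
      intro m j t
      have hper :
          Periodic (fun t => L (m + Pi.single j 1) t - L m t - c (m + Pi.single a t) j) 1 := by
        intro t
        have hclosed : c (m + Pi.single a t + Pi.single j 1) a
            = c (m + Pi.single a t) a + c (m + Pi.single a t + Pi.single a 1) j
              - c (m + Pi.single a t) j := by
          rw [hc]; abel
        simp only [hL, add_right_comm m (Pi.single j 1), Pi.single_add, ← add_assoc, hclosed]
        abel
      have h0 : ∀ m', L m' 0 = 0 := fun _ => intPrimitive_zero _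
      have := (hper.int_mul t).eq
      simp only [Int.cast_id, mul_one, Pi.single_zero, add_zero, h0] at this
      rw [← sub_eq_zero, ← sub_eq_zero.2 this]
      abel
    refine ⟨fun n => g (update n a 0) + L (update n a 0) (n a), fun n i hi => ?_⟩
    rcases mem_insert.1 hi with rfl | his
    · simp only [update_add_single_self, Pi.add_apply, Pi.single_eq_same, hL,
        update_zero_add_single]
      abel
    · have hia : i ≠ a := fun h => ha (h ▸ his)
      simp only [update_add_single_of_ne hia, hg _ i his, hshift, Pi.add_apply,
        Pi.single_eq_of_ne' hia, add_zero, update_zero_add_single]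
      abel

end Potential

section PivotMove

variable {V α : Type*}

def PivotMove (X : Set (V → α)) (x y : V → α) : Prop :=
  x ∈ X ∧ y ∈ X ∧ ∃! n, x n ≠ y n

theorem PivotMove.symm {X : Set (V → α)} {x y : V → α} (h : PivotMove X x y) :
    PivotMove X y x :=
  ⟨h.2.1, h.1, by simpa only [ne_comm] using h.2.2⟩

theorem PivotMove.exists_seq_of_reflTransGen {X : Set (V → α)} {x y : V → α}
    (hx : x ∈ X) (h : ReflTransGen (PivotMove X) x y) :
    ∃ (N : ℕ) (z : ℕ → V → α), z 0 = x ∧ z N = y ∧ (∀ k ≤ N, z k ∈ X) ∧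
      ∀ k < N, ∃! n, z k n ≠ z (k + 1) n := by
  induction h with
  | refl => exact ⟨0, fun _ => x, rfl, rfl, fun _ _ => hx, by simp⟩
  | @tail b c _ hbc ih =>
    obtain ⟨N, z, h0, hN, hmem, hstep⟩ := ih
    refine ⟨N + 1, fun k => if k ≤ N then z k else c, by simpa using h0, by simp, ?_, ?_⟩
    · intro k hk
      by_cases hkN : k ≤ N
      · simpa [hkN] using hmem k hkN
      · simpa [hkN] using hbc.2.1
    · intro k hk
      by_cases hkN : k + 1 ≤ N
      · simpa [hkN, Nat.le_of_succ_le hkN] using hstep k hkN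
      · obtain rfl : k = N := by omega
        simpa [hN] using hbc.2.2

end PivotMove

section Height

variable {ι : Type*} [DecidableEq ι]

def IsHeight (h : (ι → ℤ) → ℤ) : Prop :=
  ∀ n i, h (n + Pi.single i 1) - h n = 1 ∨ h (n + Pi.single i 1) - h n = -1

variable {h h₁ h₂ : (ι → ℤ) → ℤ}

theorem IsHeight.sub_add_single_eq_of_cast_eq {r : ℕ} (hr : 3 ≤ r) (hh₁ : IsHeight h₁)
    (hh₂ : IsHeight h₂) (n : ι → ℤ) (i : ι)
    (hcast : ((h₁ (n + Pi.single i 1) - h₂ (n + Pi.single i 1) : ℤ) : ZMod r)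
      = ((h₁ n - h₂ n : ℤ) : ZMod r)) :
    h₁ (n + Pi.single i 1) - h₂ (n + Pi.single i 1) = h₁ n - h₂ n := by
  have hdvd := (ZMod.intCast_eq_intCast_iff_dvd_sub _ _ r).1 hcast.symm
  have hsmall : |h₁ (n + Pi.single i 1) - h₂ (n + Pi.single i 1) - (h₁ n - h₂ n)| < r := by
    have := hh₁ n i
    have := hh₂ n i
    rw [abs_lt]; constructor <;> omega
  have := Int.eq_zero_of_abs_lt_dvd hdvd hsmall
  omega

theorem IsHeight.even_sub [Fintype ι] (hh₁ : IsHeight h₁) (hh₂ : IsHeight h₂) {m : ι → ℤ}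
    (hm : h₁ m = h₂ m) (n : ι → ℤ) : Even (h₁ n - h₂ n) := by
  have hconst := apply_eq_of_forall_add_single_eq
    (u := fun n => ((h₁ n - h₂ n : ℤ) : ZMod 2)) (fun n i => by
      refine (ZMod.intCast_eq_intCast_iff_dvd_sub _ _ 2).2 ?_
      have := hh₁ n i
      have := hh₂ n i
      omega) n m
  simp only [hm, sub_self, Int.cast_zero] at hconst
  exact even_iff_two_dvd.2 ((ZMod.intCast_zmod_eq_zero_iff_dvd _ 2).1 hconst)

theorem IsHeight.exists_peak (hh₁ : IsHeight h₁) (hh₂ : IsHeight h₂) {s : Finset (ι → ℤ)}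
    (hs : ∀ n ∉ s, h₁ n = h₂ n) (hlt : ∃ m, h₂ m < h₁ m) :
    ∃ n, h₂ n < h₁ n ∧
      ∀ i, h₁ (n + Pi.single i 1) = h₁ n - 1 ∧ h₁ (n - Pi.single i 1) = h₁ n - 1 := by
  classical
  have hmem : ∀ m, h₂ m < h₁ m → m ∈ s.filter (fun p => h₂ p < h₁ p) := fun m hm =>
    mem_filter.2 ⟨by_contra fun hms => by have := hs m hms; omega, hm⟩
  obtain ⟨m, hm⟩ := hlt
  -- Maximising `2 h₁ - h₂` makes every upward step of `h₁` leave the region `h₂ < h₁`.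
  obtain ⟨n, hn, hmax⟩ := (s.filter fun p => h₂ p < h₁ p).exists_max_image
    (fun p => 2 * h₁ p - h₂ p) ⟨m, hmem m hm⟩
  have hn' : h₂ n < h₁ n := (mem_filter.1 hn).2
  have hdown : ∀ q, (h₁ q - h₁ n = 1 ∨ h₁ q - h₁ n = -1) → (h₂ q - h₂ n = 1 ∨ h₂ q - h₂ n = -1) →
      h₁ q = h₁ n - 1 := by
    intro q hq1 hq2
    by_contra hne
    have := hmax q (hmem q (by omega))
    omega
  refine ⟨n, hn', fun i => ⟨hdown _ (hh₁ n i) (hh₂ n i), hdown _ ?_ ?_⟩⟩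
  · have := hh₁ (n - Pi.single i 1) i; rw [sub_add_cancel] at this; omega
  · have := hh₂ (n - Pi.single i 1) i; rw [sub_add_cancel] at this; omega

theorem IsHeight.update_sub_two [DecidableEq (ι → ℤ)] (hh : IsHeight h) {n : ι → ℤ}
    (hpeak : ∀ i, h (n + Pi.single i 1) = h n - 1 ∧ h (n - Pi.single i 1) = h n - 1) :
    IsHeight (update h n (h n - 2)) := by
  intro p i
  have hne : p + Pi.single i 1 ≠ p := by simp
  by_cases hp : p = n
  · subst hp
    simp [hne, (hpeak i).1]
  by_cases hpi : p + Pi.single i 1 = n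
  · obtain rfl : p = n - Pi.single i 1 := eq_sub_of_add_eq hpi
    simp [hp, (hpeak i).2]
  · simpa [update_apply, hp, hpi] using hh p i

theorem IsHeight.exists_pivotMove_of_lt [Fintype ι] [Nonempty ι] (hh₁ : IsHeight h₁)
    (hh₂ : IsHeight h₂) {s : Finset (ι → ℤ)} (hs : ∀ n ∉ s, h₁ n = h₂ n)
    (hlt : ∃ m, h₂ m < h₁ m) :
    ∃ h₁', PivotMove {h | IsHeight h} h₁ h₁' ∧ (∀ n ∉ s, h₁' n = h₂ n) ∧
      ∑ p ∈ s, (h₁' p - h₂ p).natAbs < ∑ p ∈ s, (h₁ p - h₂ p).natAbs := by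
  obtain ⟨n, hn, hpeak⟩ := hh₁.exists_peak hh₂ hs hlt
  have hns : n ∈ s := by_contra fun h => by have := hs n h; omega
  obtain ⟨m, hm⟩ := s.finite_toSet.exists_notMem
  have h2 : 2 ≤ h₁ n - h₂ n := by
    obtain ⟨k, hk⟩ := hh₁.even_sub hh₂ (hs m hm) n
    omega
  have hflip : h₁ n ≠ update h₁ n (h₁ n - 2) n := by simp only [update_self]; omega
  refine ⟨update h₁ n (h₁ n - 2), ⟨hh₁, hh₁.update_sub_two hpeak, n, hflip, ?_⟩, ?_, ?_⟩
  · intro p hp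
    by_contra hpn
    simp [hpn] at hp
  · intro p hp
    rw [update_of_ne (by rintro rfl; exact hp hns)]
    exact hs p hp
  · refine sum_lt_sum (fun p _ => ?_) ⟨n, hns, by simp; omega⟩
    by_cases hpn : p = n
    · subst hpn; simp; omega
    · simp [hpn]

theorem IsHeight.reflTransGen_pivotMove [Fintype ι] [Nonempty ι] (s : Finset (ι → ℤ))
    {h₁ h₂ : (ι → ℤ) → ℤ} (hh₁ : IsHeight h₁) (hh₂ : IsHeight h₂) (hs : ∀ n ∉ s, h₁ n = h₂ n) :
    ReflTransGen (PivotMove {h | IsHeight h}) h₁ h₂ := by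
  by_cases heq : h₁ = h₂
  · exact heq ▸ .refl
  by_cases hlt : ∃ m, h₂ m < h₁ m
  · obtain ⟨h₁', hmove, hs', hdec⟩ := hh₁.exists_pivotMove_of_lt hh₂ hs hlt
    exact .head hmove (reflTransGen_pivotMove s hmove.2.1 hh₂ hs')
  · have hgt : ∃ m, h₁ m < h₂ m := by
      obtain ⟨m, hm⟩ := Function.ne_iff.1 heq
      exact ⟨m, lt_of_le_of_ne (not_lt.1 fun h => hlt ⟨m, h⟩) hm⟩
    obtain ⟨h₂', hmove, hs', hdec⟩ :=
      hh₂.exists_pivotMove_of_lt hh₁ (fun n hn => (hs n hn).symm) hgt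
    have : ∑ p ∈ s, (h₁ p - h₂' p).natAbs < ∑ p ∈ s, (h₁ p - h₂ p).natAbs := by
      simpa only [← Int.natAbs_neg (h₂' _ - _), ← Int.natAbs_neg (h₂ _ - _), neg_sub] using hdec
    exact .tail (reflTransGen_pivotMove s hh₁ hmove.2.1 fun n hn => (hs' n hn).symm) hmove.symm
termination_by ∑ p ∈ s, (h₁ p - h₂ p).natAbs

end Height

section Xr

variable {d r : ℕ}

theorem adjacent_add_single (n : Site d) (i : Fin d) : adjacent (n + Pi.single i 1) n := by
  simp [adjacent, Pi.single_apply, apply_ite abs]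

theorem exists_eq_add_single_of_adjacent {n m : Site d} (h : adjacent n m) :
    ∃ i, n = m + Pi.single i 1 ∨ m = n + Pi.single i 1 := by
  set v := n - m with hv
  have hsum : ∑ i, |v i| = 1 := h
  obtain ⟨i, hi⟩ : ∃ i, v i ≠ 0 := by
    by_contra! h0
    simp [h0] at hsum
  have hsplit : |v i| + ∑ j ∈ univ.erase i, |v j| = 1 := by
    rw [add_sum_erase univ (fun j => |v j|) (mem_univ i), hsum]
  have herase : ∑ j ∈ univ.erase i, |v j| = 0 := by
    have := Int.one_le_abs hi
    have := sum_nonneg fun j (_ : j ∈ univ.erase i) => abs_nonneg (v j)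
    omega
  have hrest := (sum_eq_zero_iff_of_nonneg fun j _ => abs_nonneg (v j)).1 herase
  have hvi : v = Pi.single i (v i) := by
    ext j
    by_cases hj : j = i
    · subst hj; simp
    · simpa [hj] using hrest j (by simp [hj])
  have hi1 : |v i| = 1 := by omega
  refine ⟨i, ?_⟩
  rcases abs_eq (zero_le_one' ℤ) |>.1 hi1 with h1 | h1
  · left; linear_combination hvi.trans (by rw [h1])
  · right; linear_combination -(hvi.trans (by rw [h1, Pi.single_neg]))

def ofHeight (a : ZMod r) (h : Site d → ℤ) : Site d → ZMod r := fun n => a + h n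

theorem IsHeight.ofHeight_mem_Xr {h : Site d → ℤ} (hh : IsHeight h) (a : ZMod r) :
    ofHeight a h ∈ Xr d r := by
  intro n m hnm
  obtain ⟨i, rfl | rfl⟩ := exists_eq_add_single_of_adjacent hnm
  · rcases hh m i with h1 | h1 <;> simp [ofHeight, eq_add_of_sub_eq' h1]
  · rcases hh n i with h1 | h1 <;> simp [ofHeight, eq_add_of_sub_eq' h1]

theorem PivotMove.map_ofHeight [NeZero d] (hr : 3 ≤ r) {h h' : Site d → ℤ}
    (hmove : PivotMove {h | IsHeight h} h h') (a : ZMod r) :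
    PivotMove (Xr d r) (ofHeight a h) (ofHeight a h') := by
  obtain ⟨hh, hh', n, hn, huniq⟩ := hmove
  refine ⟨hh.ofHeight_mem_Xr a, hh'.ofHeight_mem_Xr a,
    (existsUnique_congr fun m => ?_).1 ⟨n, hn, huniq⟩⟩
  refine ⟨fun hm heq => ?_, fun hm heq => hm (by simp [_root_.ofHeight, heq])⟩
  obtain rfl := huniq m hm
  -- `h` and `h'` agree at the neighbour `m + e₀`, so they differ at `m` by `±2`, which is not
  -- `0 mod r`.
  have hagree : h (m + Pi.single 0 1) = h' (m + Pi.single 0 1) := by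
    by_contra hne
    have := huniq _ hne
    simp at this
  have := hh.sub_add_single_eq_of_cast_eq hr hh' m 0 (by
    simp only [_root_.ofHeight, add_right_inj] at heq
    push_cast
    rw [hagree, heq, sub_self, sub_self])
  omega

theorem eq_zero_of_cast_eq_zero_of_even (hr3 : 3 ≤ r) (hr4 : r ≠ 4) {k : ℤ} (heven : Even k)
    (hk : |k| ≤ 4) (hkr : (k : ZMod r) = 0) : k = 0 := by
  have hdvd := (ZMod.intCast_zmod_eq_zero_iff_dvd k r).1 hkr
  rcases lt_or_ge |k| r with hlt | hge
  · exact Int.eq_zero_of_abs_lt_dvd hdvd hlt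
  · obtain rfl : r = 3 := by omega
    obtain ⟨j, rfl⟩ := heven
    rw [abs_le] at hk
    omega

def increment (x : Site d → ZMod r) (n : Site d) (i : Fin d) : ℤ :=
  if x (n + Pi.single i 1) - x n = 1 then 1 else -1

theorem increment_cases (x : Site d → ZMod r) (n : Site d) (i : Fin d) :
    increment x n i = 1 ∨ increment x n i = -1 := by
  unfold increment; split_ifs <;> simp

theorem cast_increment {x : Site d → ZMod r} (hx : x ∈ Xr d r) (n : Site d) (i : Fin d) :
    (increment x n i : ZMod r) = x (n + Pi.single i 1) - x n := by
  unfold increment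
  split_ifs with h
  · simp [h]
  · simp [(hx _ _ (adjacent_add_single n i)).resolve_left h]

theorem increment_closed (hr3 : 3 ≤ r) (hr4 : r ≠ 4) {x : Site d → ZMod r} (hx : x ∈ Xr d r)
    (n : Site d) (i j : Fin d) :
    increment x n i + increment x (n + Pi.single i 1) j
      = increment x n j + increment x (n + Pi.single j 1) i := by
  have := increment_cases x n i
  have := increment_cases x n j
  have := increment_cases x (n + Pi.single i 1) j
  have := increment_cases x (n + Pi.single j 1) i
  rw [← sub_eq_zero]
  refine eq_zero_of_cast_eq_zero_of_even hr3 hr4 ?_ ?_ ?_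
  · rw [Int.even_iff]; omega
  · rw [abs_le]; omega
  · push_cast
    simp only [cast_increment hx, add_right_comm n (Pi.single j 1)]
    ring

theorem exists_height_of_mem_Xr (hr3 : 3 ≤ r) (hr4 : r ≠ 4) {x : Site d → ZMod r}
    (hx : x ∈ Xr d r) (p : Site d) :
    ∃ h : Site d → ℤ, IsHeight h ∧ h p = 0 ∧ ofHeight (x p) h = x := by
  obtain ⟨g, hg⟩ := exists_potential_of_closed (increment x) (increment_closed hr3 hr4 hx)
  refine ⟨fun n => g n - g p, fun n i => ?_, sub_self _, ?_⟩
  · simp only [hg]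
    rcases increment_cases x n i with h | h <;> simp [h]
  · ext n
    have := apply_eq_of_forall_add_single_eq (u := fun n => (g n : ZMod r) - x n)
      (fun n i => by simp only [hg, Int.cast_add, cast_increment hx]; ring) n p
    simp only [ofHeight]
    push_cast
    linear_combination this

end Xr

/-- For `d ≥ 2` and a positive integer `r ∉ {1,2,4}`, the subshift `X_r`
has the pivot property: any two of its points differing at finitely many sites are
connected by a chain of points of `X_r` in which consecutive points differ at exactly
one site. -/
theorem Xr_pivot_property
    (d r : ℕ) (hd : 2 ≤ d) (hr0 : 0 < r) (hr1 : r ≠ 1) (hr2 : r ≠ 2) (hr4 : r ≠ 4)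
    (x y : Site d → ZMod r) (hx : x ∈ Xr d r) (hy : y ∈ Xr d r)
    (hdiff : {n : Site d | x n ≠ y n}.Finite) :
    ∃ (N : ℕ) (z : ℕ → Site d → ZMod r),
      z 0 = x ∧ z N = y ∧
      (∀ k ≤ N, z k ∈ Xr d r) ∧
      (∀ k < N, ∃! n : Site d, z k n ≠ z (k + 1) n) := by
  have hr3 : 3 ≤ r := by omega
  have : Nontrivial (Fin d) := Fin.nontrivial_iff_two_le.2 hd
  have : NeZero d := ⟨by omega⟩
  obtain ⟨M, hM⟩ := hdiff.exists_disjoint_boxCompl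
  have hxy : ∀ n ∈ boxCompl M, x n = y n := fun n hn =>
    by_contra fun hne => Set.disjoint_left.1 hM hne hn
  let p : Site d := fun _ => M
  have hp : p ∈ boxCompl M := ⟨0, le_abs_self M⟩
  obtain ⟨Hx, hHx, hHxp, hHxx⟩ := exists_height_of_mem_Xr hr3 hr4 hx p
  obtain ⟨Hy, hHy, hHyp, hHyy⟩ := exists_height_of_mem_Xr hr3 hr4 hy p
  have hcast : ∀ n ∈ boxCompl M, ((Hx n - Hy n : ℤ) : ZMod r) = 0 := by
    intro n hn
    have hHxn := congrFun hHxx n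
    have hHyn := congrFun hHyy n
    simp only [ofHeight] at hHxn hHyn
    push_cast
    linear_combination hHxn - hHyn + hxy n hn - hxy p hp
  have hHxy : ∀ n ∉ (finite_compl_boxCompl M).toFinset, Hx n = Hy n := by
    intro n hn
    simp only [Set.Finite.mem_toFinset, Set.mem_compl_iff, not_not] at hn
    have := apply_eq_of_forall_add_single_eq_on_boxCompl (u := fun n => Hx n - Hy n)
      (fun n i hn hn' => hHx.sub_add_single_eq_of_cast_eq hr3 hHy n i
        (by rw [hcast n hn, hcast _ hn'])) hn hp
    simp only [hHxp, hHyp] at this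
    omega
  have hchain : ReflTransGen (PivotMove (Xr d r)) (ofHeight (x p) Hx) (ofHeight (x p) Hy) :=
    (hHx.reflTransGen_pivotMove _ hHy hHxy).lift _ fun _ _ hmove => hmove.map_ofHeight hr3 (x p)
  rw [hHxx, hxy p hp, hHyy] at hchain
  exact PivotMove.exists_seq_of_reflTransGen hx hchain
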